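/- Let M be a metric space, γ : [0, ℓ] → M a unit-speed minimizing geodesic, and c, r₀ > 0. Suppose that for every point x ∈ M, if t̂ ∈ [0, ℓ] minimizes t ↦ d(x, γ(t)) and t̂ ∈ [r₀, ℓ − r₀], then d(x, γ(t̂)) ≤ 4c (call this property (P)). Also assume that the 5c-neighborhood of γ([r₀, ℓ − r₀]) is contained in the 4c-neighborhood of γ([0, ℓ]). Then for any s with ℓ > 4s + 2r₀, the s-neighborhood of γ([2s + r₀, ℓ − 2s − r₀]) is contained in the 4c-neighborhood of γ([0, ℓ]). -/
import Mathlib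


/-- Under property (P) (any point whose closest-point parameter on
`γ` lies in `[r₀, ℓ − r₀]` is within `4c` of `γ`) and the inclusion
`N_{5c}(γ([r₀, ℓ−r₀])) ⊆ N_{4c}(γ([0, ℓ]))`, for any `s` with `ℓ > 4s + 2r₀`,
`N_s(γ([2s+r₀, ℓ−2s−r₀])) ⊆ N_{4c}(γ([0, ℓ]))`. -/
theorem stmt_1 {M : Type*} [MetricSpace M] (ℓ c r₀ : ℝ) (hc : 0 < c)
    (hr₀ : 0 < r₀) (γ : ℝ → M)
    (hγ : ∀ s ∈ Set.Icc (0:ℝ) ℓ, ∀ t ∈ Set.Icc (0:ℝ) ℓ,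
      dist (γ s) (γ t) = |s - t|)
    (hP : ∀ x : M, ∀ tHat ∈ Set.Icc (0:ℝ) ℓ,
      (∀ t ∈ Set.Icc (0:ℝ) ℓ, dist x (γ tHat) ≤ dist x (γ t)) →
      tHat ∈ Set.Icc r₀ (ℓ - r₀) → dist x (γ tHat) ≤ 4 * c)
    (hcover : ∀ x : M, (∃ t ∈ Set.Icc r₀ (ℓ - r₀), dist x (γ t) < 5 * c) →
      ∃ t ∈ Set.Icc (0:ℝ) ℓ, dist x (γ t) < 4 * c) :
    ∀ s : ℝ, ℓ > 4 * s + 2 * r₀ →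
      ∀ x : M, (∃ t ∈ Set.Icc (2 * s + r₀) (ℓ - 2 * s - r₀),
          dist x (γ t) < s) →
        ∃ t ∈ Set.Icc (0:ℝ) ℓ, dist x (γ t) < 4 * c := by
  intro s hs x ⟨t, ht, hxt⟩
  have hs0 : 0 < s := lt_of_le_of_lt dist_nonneg hxt
  have ht01 : t ∈ Set.Icc (0:ℝ) ℓ := by
    constructor <;> [linarith [ht.1]; linarith [ht.2]]
  -- continuity of the distance function
  have hlip : LipschitzOnWith 1 (fun t => dist x (γ t)) (Set.Icc (0:ℝ) ℓ) := by
    apply LipschitzOnWith.of_dist_le_mul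
    intro a ha b hb
    have := abs_dist_sub_le (γ a) (γ b) x
    rw [dist_comm (γ a) x, dist_comm (γ b) x] at this
    calc dist (dist x (γ a)) (dist x (γ b)) = |dist x (γ a) - dist x (γ b)| :=
          Real.dist_eq _ _
      _ ≤ dist (γ a) (γ b) := this
      _ = |a - b| := hγ a ha b hb
      _ = 1 * dist a b := by rw [Real.dist_eq, one_mul]
  obtain ⟨tHat, htHat, hmin⟩ := (isCompact_Icc).exists_isMinOn
    ⟨t, ht01⟩ hlip.continuousOn
  have hmin' : ∀ u ∈ Set.Icc (0:ℝ) ℓ, dist x (γ tHat) ≤ dist x (γ u) :=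
    fun u hu => hmin hu
  have hle : dist x (γ tHat) ≤ dist x (γ t) := hmin' t ht01
  have hdd : dist (γ tHat) (γ t) < 2 * s := by
    calc dist (γ tHat) (γ t) ≤ dist (γ tHat) x + dist x (γ t) := dist_triangle _ _ _
      _ = dist x (γ tHat) + dist x (γ t) := by rw [dist_comm]
      _ < 2 * s := by linarith
  have habs : |tHat - t| < 2 * s := by
    rw [← hγ tHat htHat t ht01]; exact hdd
  have habs' := abs_lt.mp habs
  have htHatIn : tHat ∈ Set.Icc r₀ (ℓ - r₀) := by
    constructor <;> [linarith [ht.1, habs'.1, habs'.2]; linarith [ht.2, habs'.1, habs'.2]]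
  have h4c : dist x (γ tHat) ≤ 4 * c := hP x tHat htHat hmin' htHatIn
  exact hcover x ⟨tHat, htHatIn, by linarith⟩
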